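/- For every base SL-FL formula α, store s, and heaplet h: if h1 and h2 are subheaplets of h such that Supp(α, s, h1) = dom(h1) ≠ ⊥ and Supp(α, s, h2) = dom(h2) ≠ ⊥, then dom(h1) = dom(h2), and hence h1 = h2. -/
import Mathlib


/-!
# Base SL-FL (determined-heaplet separation logic)

Locations `Loc` with a distinguished `nil`, field names `F`, variables `Var`.
A heaplet is a domain `dom ⊆ Loc \ {nil}` together with, for each field, a function
defined on the domain (extended by `nil` outside the domain, so that heaplets with the
same domain and the same field values on the domain are equal).
-/

namespace SLFL

open scoped Classical

/-- A heaplet: a domain of locations (not containing `nil`) together with a value for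
each field at each location of the domain.  Outside the domain the maps are required to
take the junk value `nil`, so that heaplets are determined by their domain and their
field values on the domain. -/
structure Heaplet (Loc F : Type) (nil : Loc) where
  dom : Set Loc
  map : F → Loc → Loc
  nil_not_mem : nil ∉ dom
  map_outside : ∀ f l, l ∉ dom → map f l = nil

variable {Loc F Var : Type} {nil : Loc}

/-- The restriction `h↾S`: the heaplet with domain `S ∩ dom h` and fields restricted
accordingly. -/
noncomputable def Heaplet.restrict (h : Heaplet Loc F nil) (S : Set Loc) :
    Heaplet Loc F nil where
  dom := S ∩ h.dom
  map := fun f l => if l ∈ S ∩ h.dom then h.map f l else nil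
  nil_not_mem := fun hc => h.nil_not_mem hc.2
  map_outside := fun f l hl => by simp [hl]

/-- `Agrees h' h S`: the heaplet `h'` agrees with `h` on the set `S`. -/
def Agrees (h' h : Heaplet Loc F nil) (S : Set Loc) : Prop :=
  S ⊆ h.dom ∧ S ⊆ h'.dom ∧ ∀ f : F, ∀ u ∈ S, h'.map f u = h.map f u

/-- `Subheaplet h' h`: `h'` is a subheaplet of `h`. -/
def Subheaplet (h' h : Heaplet Loc F nil) : Prop :=
  h'.dom ⊆ h.dom ∧ Agrees h h' h'.dom

/-- Formulas of the base SL-FL logic: heap-independent formulas, points-to atoms,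
guarded existentials `∃y.(x ↦_f y : α)`, conditionals, conjunction, overlapping
conjunction `∧∧`, disjunction, and separating conjunction `⋆`. -/
inductive Fml (Var F Loc : Type) : Type _ where
  | pure (δ : (Var → Loc) → Prop)
  | pointsTo (x : Var) (f : F) (y : Var)
  | exGuard (y x : Var) (f : F) (α : Fml Var F Loc)
  | ite (γ α β : Fml Var F Loc)
  | and (α β : Fml Var F Loc)
  | oand (α β : Fml Var F Loc)
  | or (α β : Fml Var F Loc)
  | star (α β : Fml Var F Loc)

/-- Union of two partial sets of locations (`none` plays the role of `⊥`). -/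
def union2 : Option (Set Loc) → Option (Set Loc) → Option (Set Loc)
  | some a, some b => some (a ∪ b)
  | _, _ => none

mutual
/-- The partial support `Supp(α, s, h)`; `none` is `⊥`. -/
noncomputable def Supp : Fml Var F Loc → (Var → Loc) → Heaplet Loc F nil → Option (Set Loc)
  | .pure _, _, _ => some (∅ : Set Loc)
  | .pointsTo x _ _, s, h => if s x ∈ h.dom then some {s x} else none
  | .exGuard y x f α, s, h =>
      if s x ∈ h.dom then
        match Supp α (Function.update s y (h.map f (s x))) h with
        | some S => some ({s x} ∪ S)
        | none => none
      else none
  | .ite γ α β, s, h =>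
      match Supp γ s h with
      | none => none
      | some Sγ =>
        if Sat γ s (h.restrict Sγ) then (Supp α s h).map fun Sα => Sγ ∪ Sα
        else (Supp β s h).map fun Sβ => Sγ ∪ Sβ
  | .and α β, s, h => union2 (Supp α s h) (Supp β s h)
  | .oand α β, s, h => union2 (Supp α s h) (Supp β s h)
  | .or α β, s, h => union2 (Supp α s h) (Supp β s h)
  | .star α β, s, h => union2 (Supp α s h) (Supp β s h)

/-- Satisfaction `(s, h) ⊨ α`. -/
noncomputable def Sat : Fml Var F Loc → (Var → Loc) → Heaplet Loc F nil → Prop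
  | .pure δ, s, h => δ s ∧ h.dom = ∅
  | .pointsTo x f y, s, h => h.dom = {s x} ∧ h.map f (s x) = s y
  | .exGuard y x f α, s, h =>
      s x ∈ h.dom ∧
        ∃ S, Supp α (Function.update s y (h.map f (s x))) h = some S ∧
          h.dom = {s x} ∪ S ∧
          Sat α (Function.update s y (h.map f (s x))) (h.restrict S)
  | .ite γ α β, s, h =>
      ∃ Sγ, Supp γ s h = some Sγ ∧
        ((Sat γ s (h.restrict Sγ) ∧
            ∃ Sα, Supp α s h = some Sα ∧ h.dom = Sγ ∪ Sα ∧ Sat α s (h.restrict Sα)) ∨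
         (¬ Sat γ s (h.restrict Sγ) ∧
            ∃ Sβ, Supp β s h = some Sβ ∧ h.dom = Sγ ∪ Sβ ∧ Sat β s (h.restrict Sβ)))
  | .and α β, s, h => Sat α s h ∧ Sat β s h
  | .oand α β, s, h =>
      ∃ Sα Sβ, Supp α s h = some Sα ∧ Supp β s h = some Sβ ∧
        h.dom = Sα ∪ Sβ ∧ Sat α s (h.restrict Sα) ∧ Sat β s (h.restrict Sβ)
  | .or α β, s, h =>
      ∃ Sα Sβ, Supp α s h = some Sα ∧ Supp β s h = some Sβ ∧
        h.dom = Sα ∪ Sβ ∧ (Sat α s (h.restrict Sα) ∨ Sat β s (h.restrict Sβ))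
  | .star α β, s, h =>
      ∃ h₁ h₂ : Heaplet Loc F nil, Subheaplet h₁ h ∧ Subheaplet h₂ h ∧
        Disjoint h₁.dom h₂.dom ∧ h.dom = h₁.dom ∪ h₂.dom ∧ Sat α s h₁ ∧ Sat β s h₂
end

theorem union2_eq_some {o₁ o₂ : Option (Set Loc)} {S : Set Loc}
    (hS : union2 o₁ o₂ = some S) : ∃ a b, o₁ = some a ∧ o₂ = some b ∧ S = a ∪ b := by
  cases o₁ with
  | none => exact absurd hS (by simp [union2])
  | some a =>
    cases o₂ with
    | none => exact absurd hS (by simp [union2])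
    | some b => exact ⟨a, b, rfl, rfl, (Option.some.inj hS).symm⟩

theorem Supp_ite_eq (γ α β : Fml Var F Loc) (s : Var → Loc) (h : Heaplet Loc F nil)
    {Sγ : Set Loc} (hG : Supp (nil := nil) γ s h = some Sγ) :
    Supp (nil := nil) (.ite γ α β) s h =
      if Sat γ s (h.restrict Sγ) then (Supp (nil := nil) α s h).map (fun Sα => Sγ ∪ Sα)
      else (Supp (nil := nil) β s h).map (fun Sβ => Sγ ∪ Sβ) := by
  simp only [Supp, hG]

theorem Heaplet.ext'
 {h₁ h₂ : Heaplet Loc F nil} (hdom : h₁.dom = h₂.dom)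
    (hmap : ∀ f l, l ∈ h₁.dom → h₁.map f l = h₂.map f l) : h₁ = h₂ := by
  cases h₁ with
  | mk d₁ m₁ n₁ o₁ =>
    cases h₂ with
    | mk d₂ m₂ n₂ o₂ =>
      simp only at hdom hmap
      subst hdom
      have : m₁ = m₂ := by
        funext f l
        by_cases hl : l ∈ d₁
        · exact hmap f l hl
        · rw [o₁ f l hl, o₂ f l hl]
      subst this
      rfl

theorem restrict_eq_of_subheaplet {h' h : Heaplet Loc F nil} (hsub : Subheaplet h' h)
    {S : Set Loc} (hS : S ⊆ h'.dom) : h.restrict S = h'.restrict S := by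
  apply Heaplet.ext'
  · show S ∩ h.dom = S ∩ h'.dom
    rw [Set.inter_eq_left.2 (hS.trans hsub.1), Set.inter_eq_left.2 hS]
  · intro f l hl
    have hl' : l ∈ S ∩ h.dom := hl
    have hlS : l ∈ S := hl'.1
    simp only [Heaplet.restrict]
    rw [if_pos hl', if_pos ⟨hlS, hS hlS⟩]
    exact hsub.2.2.2 f l (hS hlS)

theorem supp_subset :
    ∀ (α : Fml Var F Loc) (s : Var → Loc) (h : Heaplet Loc F nil) (S : Set Loc),
      Supp (nil := nil) α s h = some S → S ⊆ h.dom
  | .pure _, s, h, S, hS => by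
      simp only [Supp, Option.some.injEq] at hS
      subst hS; simp
  | .pointsTo x f y, s, h, S, hS => by
      simp only [Supp] at hS
      split at hS
      · cases Option.some.inj hS
        simpa [Set.singleton_subset_iff] using ‹s x ∈ h.dom›
      · cases hS
  | .exGuard y x f α, s, h, S, hS => by
      simp only [Supp] at hS
      split at hS
      · rename_i hx
        rcases hA : Supp (nil := nil) α (Function.update s y (h.map f (s x))) h with _ | S'
        · rw [hA] at hS; cases hS
        · rw [hA] at hS
          cases Option.some.inj hS
          have := supp_subset α _ h S' hA
          intro l hl
          rcases hl with hl | hl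
          · cases hl; exact hx
          · exact this hl
      · cases hS
  | .ite γ α β, s, h, S, hS => by
      rcases hG : Supp (nil := nil) γ s h with _ | Sγ
      · simp only [Supp, hG] at hS; exact absurd hS (by simp)
      · rw [Supp_ite_eq γ α β s h hG] at hS
        have hGsub := supp_subset γ s h Sγ hG
        split at hS
        · rcases Option.map_eq_some_iff.1 hS with ⟨Sα, hA, rfl⟩
          exact Set.union_subset hGsub (supp_subset α s h Sα hA)
        · rcases Option.map_eq_some_iff.1 hS with ⟨Sβ, hB, rfl⟩
          exact Set.union_subset hGsub (supp_subset β s h Sβ hB)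
  | .and α β, s, h, S, hS => by
      simp only [Supp] at hS
      obtain ⟨Sα, Sβ, hA, hB, rfl⟩ := union2_eq_some hS
      exact Set.union_subset (supp_subset α s h Sα hA) (supp_subset β s h Sβ hB)
  | .oand α β, s, h, S, hS => by
      simp only [Supp] at hS
      obtain ⟨Sα, Sβ, hA, hB, rfl⟩ := union2_eq_some hS
      exact Set.union_subset (supp_subset α s h Sα hA) (supp_subset β s h Sβ hB)
  | .or α β, s, h, S, hS => by
      simp only [Supp] at hS
      obtain ⟨Sα, Sβ, hA, hB, rfl⟩ := union2_eq_some hS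
      exact Set.union_subset (supp_subset α s h Sα hA) (supp_subset β s h Sβ hB)
  | .star α β, s, h, S, hS => by
      simp only [Supp] at hS
      obtain ⟨Sα, Sβ, hA, hB, rfl⟩ := union2_eq_some hS
      exact Set.union_subset (supp_subset α s h Sα hA) (supp_subset β s h Sβ hB)

theorem supp_mono {h' h : Heaplet Loc F nil} (hsub : Subheaplet h' h) :
    ∀ (α : Fml Var F Loc) (s : Var → Loc) (S : Set Loc),
      Supp (nil := nil) α s h' = some S → Supp (nil := nil) α s h = some S
  | .pure _, s, S, hS => hS
  | .pointsTo x f y, s, S, hS => by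
      simp only [Supp] at hS ⊢
      split at hS
      · rw [if_pos (hsub.1 ‹s x ∈ h'.dom›)]; exact hS
      · cases hS
  | .exGuard y x f α, s, S, hS => by
      simp only [Supp] at hS ⊢
      split at hS
      · rename_i hx
        have hmap : h.map f (s x) = h'.map f (s x) := hsub.2.2.2 f (s x) hx
        rw [if_pos (hsub.1 hx), hmap]
        rcases hA : Supp (nil := nil) α (Function.update s y (h'.map f (s x))) h' with _ | S'
        · rw [hA] at hS; cases hS
        · rw [hA] at hS
          rw [supp_mono hsub α _ S' hA]
          exact hS
      · cases hS
  | .ite γ α β, s, S, hS => by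
      rcases hG : Supp (nil := nil) γ s h' with _ | Sγ
      · simp only [Supp, hG] at hS; exact absurd hS (by simp)
      · rw [Supp_ite_eq γ α β s h' hG] at hS
        rw [Supp_ite_eq γ α β s h (supp_mono hsub γ s Sγ hG),
            restrict_eq_of_subheaplet hsub (supp_subset γ s h' Sγ hG)]
        split at hS
        · rename_i hsat
          rw [if_pos hsat]
          rcases Option.map_eq_some_iff.1 hS with ⟨Sα, hA, rfl⟩
          rw [supp_mono hsub α s Sα hA]; rfl
        · rename_i hsat
          rw [if_neg hsat]
          rcases Option.map_eq_some_iff.1 hS with ⟨Sβ, hB, rfl⟩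
          rw [supp_mono hsub β s Sβ hB]; rfl
  | .and α β, s, S, hS => by
      simp only [Supp] at hS ⊢
      obtain ⟨Sα, Sβ, hA, hB, rfl⟩ := union2_eq_some hS
      rw [supp_mono hsub α s Sα hA, supp_mono hsub β s Sβ hB]
      rfl
  | .oand α β, s, S, hS => by
      simp only [Supp] at hS ⊢
      obtain ⟨Sα, Sβ, hA, hB, rfl⟩ := union2_eq_some hS
      rw [supp_mono hsub α s Sα hA, supp_mono hsub β s Sβ hB]
      rfl
  | .or α β, s, S, hS => by
      simp only [Supp] at hS ⊢
      obtain ⟨Sα, Sβ, hA, hB, rfl⟩ := union2_eq_some hS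
      rw [supp_mono hsub α s Sα hA, supp_mono hsub β s Sβ hB]
      rfl
  | .star α β, s, S, hS => by
      simp only [Supp] at hS ⊢
      obtain ⟨Sα, Sβ, hA, hB, rfl⟩ := union2_eq_some hS
      rw [supp_mono hsub α s Sα hA, supp_mono hsub β s Sβ hB]
      rfl

end SLFL

open SLFL in
/-- For every base SL-FL formula `α`, store `s`, and heaplet `h`:
if `h₁` and `h₂` are subheaplets of `h` with `Supp(α, s, h₁) = dom(h₁) ≠ ⊥` and
`Supp(α, s, h₂) = dom(h₂) ≠ ⊥`, then `dom(h₁) = dom(h₂)`, and hence `h₁ = h₂`. -/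
theorem supp_eq_dom_unique {Loc F Var : Type} {nil : Loc}
    (α : Fml Var F Loc) (s : Var → Loc) (h h₁ h₂ : Heaplet Loc F nil)
    (hsub₁ : Subheaplet h₁ h) (hsub₂ : Subheaplet h₂ h)
    (hS₁ : Supp (nil := nil) α s h₁ = some h₁.dom)
    (hS₂ : Supp (nil := nil) α s h₂ = some h₂.dom) :
    h₁.dom = h₂.dom ∧ h₁ = h₂ := by
  have e₁ := supp_mono hsub₁ α s h₁.dom hS₁
  have e₂ := supp_mono hsub₂ α s h₂.dom hS₂
  have hdom : h₁.dom = h₂.dom := Option.some.inj (e₁.symm.trans e₂)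
  refine ⟨hdom, Heaplet.ext' hdom ?_⟩
  intro f l hl
  have hl₂ : l ∈ h₂.dom := hdom ▸ hl
  rw [← hsub₁.2.2.2 f l hl, ← hsub₂.2.2.2 f l hl₂]
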